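/- Eliminability of cuts: each of the rules scut and ccut of the skew monoidal sequent calculus is admissible in the cut-free fragment, i.e., given cut-free derivations of the premises of scut (respectively ccut), there is a cut-free derivation of its conclusion. -/

import Mathlib

/-!
Both cuts are eliminated together, by well-founded recursion on the cut formula and then on the
derivations. A stoup cut is permuted up its left premise until that premise ends in `IR` or `⊗R`,
which is then matched against the last rule of the right premise; in the principal case
`⊗R`/`⊗L`, a cut on `A ⊗ B` becomes a stoup cut on `A` followed by a context cut on `B`. A context
cut is permuted up its right premise until `uf` moves the cut formula into the stoup, where it
becomes a stoup cut on the same formula whose right premise is smaller.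
-/

set_option linter.unusedVariables false
inductive Fma (V : Type) : Type
  | var : V → Fma V
  | unit : Fma V
  | tens : Fma V → Fma V → Fma V

abbrev Stp (V : Type) := Option (Fma V)

def stpF {V : Type} : Stp V → Fma V
  | none => Fma.unit
  | some A => A

def semF {V : Type} : Fma V → List (Fma V) → Fma V
  | A, [] => A
  | A, B :: Γ => semF (A.tens B) Γ

abbrev sem {V : Type} (S : Stp V) (Γ : List (Fma V)) : Fma V := semF (stpF S) Γ

theorem semF_append {V : Type} (A : Fma V) (Γ Δ : List (Fma V)) :
    semF A (Γ ++ Δ) = semF (semF A Γ) Δ := by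
  induction Γ generalizing A with
  | nil => rfl
  | cons B Γ ih => exact ih _

/-- The cut-free skew monoidal sequent calculus. -/
inductive CF {V : Type} : Stp V → List (Fma V) → Fma V → Type
  | ax : CF (some A) [] A
  | uf : CF (some A) Γ C → CF none (A :: Γ) C
  | Il : CF none Γ C → CF (some Fma.unit) Γ C
  | Ir : CF none [] Fma.unit
  | tl : CF (some A) (B :: Γ) C → CF (some (Fma.tens A B)) Γ C
  | tr : CF S Γ A → CF none Δ B → CF S (Γ ++ Δ) (Fma.tens A B)

theorem List.append_eq_append_cons_cases {α : Type*} {l₁ l₂ d₀ d₁ : List α} {a : α}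
    (h : l₁ ++ l₂ = d₀ ++ a :: d₁) :
    (∃ l, l₁ = d₀ ++ a :: l ∧ d₁ = l ++ l₂) ∨ ∃ l, d₀ = l₁ ++ l ∧ l₂ = l ++ a :: d₁ := by
  rcases List.append_eq_append_iff.mp h with ⟨l, hd₀, hl₂⟩ | ⟨l, hl₁, hl⟩
  · exact .inr ⟨l, hd₀, hl₂⟩
  · rcases List.cons_eq_append_iff.mp hl with ⟨rfl, rfl⟩ | ⟨l', rfl, hd₁⟩
    · exact .inr ⟨[], by simpa using hl₁.symm, rfl⟩
    · exact .inl ⟨l', hl₁, hd₁⟩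

namespace CF

variable {V : Type}

mutual

theorem scut_admissible {S : Stp V} {Γ Δ : List (Fma V)} {A C : Fma V}
    (f : CF S Γ A) (g : CF (some A) Δ C) : Nonempty (CF S (Γ ++ Δ) C) :=
  match f, g with
  | ax, g => ⟨g⟩
  | uf f, g => (scut_admissible f g).map uf
  | Il f, g => (scut_admissible f g).map Il
  | tl f, g => (scut_admissible f g).map tl
  | Ir, ax => ⟨Ir⟩
  | Ir, Il g => ⟨g⟩
  | Ir, tr g₁ g₂ => by simpa using (scut_admissible Ir g₁).map fun h => tr h g₂
  | tr f₁ f₂, ax => by simpa using ⟨tr f₁ f₂⟩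
  | tr f₁ f₂, tl g =>
    (scut_admissible f₁ g).elim fun h => by simpa using ccut_admissible_of_eq f₂ h rfl
  | tr f₁ f₂, tr g₁ g₂ => by simpa using (scut_admissible (tr f₁ f₂) g₁).map fun h => tr h g₂
termination_by (sizeOf A, sizeOf g, sizeOf f)

/- The context of `f` is a variable so that `match f` can refine it. -/
theorem ccut_admissible_of_eq {S : Stp V} {Γ Ξ Δ₀ Δ₁ : List (Fma V)} {A C : Fma V}
    (g : CF none Γ A) (f : CF S Ξ C) (hΞ : Ξ = Δ₀ ++ A :: Δ₁) :
    Nonempty (CF S (Δ₀ ++ Γ ++ Δ₁) C) :=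
  match f with
  | ax | Ir => by simp at hΞ
  | uf f => by
    rcases List.cons_eq_append_iff.mp hΞ with ⟨rfl, hA⟩ | ⟨Δ₀, rfl, hΓ⟩
    · obtain ⟨rfl, rfl⟩ := List.cons.inj hA.symm
      exact scut_admissible g f
    · exact (ccut_admissible_of_eq g f hΓ).map uf
  | Il f => (ccut_admissible_of_eq g f hΞ).map Il
  | tl f => (ccut_admissible_of_eq (Δ₀ := _ :: Δ₀) g f (by rw [hΞ]; rfl)).map tl
  | tr f₁ f₂ => by
    rcases List.append_eq_append_cons_cases hΞ with ⟨l, h₁, rfl⟩ | ⟨l, rfl, h₂⟩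
    · simpa using (ccut_admissible_of_eq g f₁ h₁).map fun h => tr h f₂
    · simpa using (ccut_admissible_of_eq g f₂ h₂).map (tr f₁)
termination_by (sizeOf A, sizeOf f, 0)
decreasing_by all_goals subst_vars; decreasing_tactic

end

theorem ccut_admissible {S : Stp V} {Γ Δ₀ Δ₁ : List (Fma V)} {A C : Fma V}
    (g : CF none Γ A) (f : CF S (Δ₀ ++ A :: Δ₁) C) : Nonempty (CF S (Δ₀ ++ Γ ++ Δ₁) C) :=
  ccut_admissible_of_eq g f rfl

end CF

/-- Eliminability of cuts: the rules `scut` and `ccut` are admissible in the cut-free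
fragment of the skew monoidal sequent calculus. -/
theorem statement6 (V : Type) :
    (∀ (S : Stp V) (Γ Δ : List (Fma V)) (A C : Fma V),
      CF S Γ A → CF (some A) Δ C → Nonempty (CF S (Γ ++ Δ) C)) ∧
    (∀ (S : Stp V) (Γ Δ₀ Δ₁ : List (Fma V)) (A C : Fma V),
      CF none Γ A → CF S (Δ₀ ++ A :: Δ₁) C → Nonempty (CF S ((Δ₀ ++ Γ) ++ Δ₁) C)) :=
  ⟨fun _ _ _ _ _ => CF.scut_admissible, fun _ _ _ _ _ _ => CF.ccut_admissible⟩
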